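/- In a fibred locale, the class of supine monomorphisms admits a calculus of right fractions: it contains all identities, is closed under composition, supine monos are stable under pullback in the total category, and any parallel pair equalized after composing with a supine mono is already equal. -/

import Mathlib

open CategoryTheory CategoryTheory.Limits

universe w v u

/-- A fibred locale over a base category `B`, presented as an indexed preorder:
a preordered fibre over each object, reindexing, indexed coproducts `ex` left adjoint
to reindexing, fibrewise finite products (top and binary meets) preserved by
reindexing, the Beck–Chevalley condition over pullback squares, and the Frobenius
condition.  (The total functor of such a fibration is automatically faithful.) -/
structure FibredLocale (B : Type u) [Category.{v} B] where
  Fib : B → Type w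
  le : ∀ {X : B}, Fib X → Fib X → Prop
  le_refl : ∀ {X : B} (U : Fib X), le U U
  le_trans : ∀ {X : B} {U V W : Fib X}, le U V → le V W → le U W
  reind : ∀ {X Y : B}, (X ⟶ Y) → Fib Y → Fib X
  reind_mono : ∀ {X Y : B} (f : X ⟶ Y) {U V : Fib Y}, le U V → le (reind f U) (reind f V)
  reind_id_le : ∀ {X : B} (U : Fib X), le (reind (𝟙 X) U) U
  le_reind_id : ∀ {X : B} (U : Fib X), le U (reind (𝟙 X) U)
  reind_comp_le : ∀ {X Y Z : B} (f : X ⟶ Y) (g : Y ⟶ Z) (U : Fib Z),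
    le (reind (f ≫ g) U) (reind f (reind g U))
  le_reind_comp : ∀ {X Y Z : B} (f : X ⟶ Y) (g : Y ⟶ Z) (U : Fib Z),
    le (reind f (reind g U)) (reind (f ≫ g) U)
  ex : ∀ {X Y : B}, (X ⟶ Y) → Fib X → Fib Y
  ex_adj : ∀ {X Y : B} (f : X ⟶ Y) (U : Fib X) (V : Fib Y),
    le (ex f U) V ↔ le U (reind f V)
  top : ∀ X : B, Fib X
  le_top : ∀ {X : B} (U : Fib X), le U (top X)
  inf : ∀ {X : B}, Fib X → Fib X → Fib X
  inf_le_left : ∀ {X : B} (U V : Fib X), le (inf U V) U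
  inf_le_right : ∀ {X : B} (U V : Fib X), le (inf U V) V
  le_inf : ∀ {X : B} {U V W : Fib X}, le W U → le W V → le W (inf U V)
  le_reind_top : ∀ {X Y : B} (f : X ⟶ Y), le (top X) (reind f (top Y))
  le_reind_inf : ∀ {X Y : B} (f : X ⟶ Y) (U V : Fib Y),
    le (inf (reind f U) (reind f V)) (reind f (inf U V))
  beck : ∀ {P X Y Z : B} (fst : P ⟶ X) (snd : P ⟶ Y) (g : X ⟶ Z) (h : Y ⟶ Z),
    IsPullback fst snd g h → ∀ U : Fib X,
      le (ex snd (reind fst U)) (reind h (ex g U)) ∧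
      le (reind h (ex g U)) (ex snd (reind fst U))
  frobenius_le : ∀ {X Y : B} (f : X ⟶ Y) (U : Fib X) (V : Fib Y),
    le (ex f (inf U (reind f V))) (inf (ex f U) V)
  le_frobenius : ∀ {X Y : B} (f : X ⟶ Y) (U : Fib X) (V : Fib Y),
    le (inf (ex f U) V) (ex f (inf U (reind f V)))

namespace FibredLocale

variable {B : Type u} [Category.{v} B] (L : FibredLocale.{w} B)

/-- Isomorphism in a fibre of a fibred locale: mutual inequality. -/
def equiv {X : B} (U V : L.Fib X) : Prop := L.le U V ∧ L.le V U

/-- A fibred locale is separated if `∃_e ⊤ ≅ ⊤` for every regular epimorphism `e`. -/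
def Separated : Prop :=
  ∀ {X Y : B} (e : X ⟶ Y), Nonempty (RegularEpi e) → L.equiv (L.ex e (L.top X)) (L.top Y)

end FibredLocale

namespace FibredLocale

variable {B : Type u} [Category.{v} B]

/-- The total category of a fibred locale (Grothendieck construction). -/
def Tot (L : FibredLocale.{w} B) := Σ X : B, L.Fib X

instance (L : FibredLocale.{w} B) : Category (Tot L) where
  Hom A C := { f : A.1 ⟶ C.1 // L.le A.2 (L.reind f C.2) }
  id A := ⟨𝟙 A.1, L.le_reind_id A.2⟩
  comp {A M C} f g := ⟨f.1 ≫ g.1,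
    L.le_trans f.2 (L.le_trans (L.reind_mono f.1 g.2) (L.le_reind_comp f.1 g.1 C.2))⟩
  id_comp f := Subtype.ext (by simp)
  comp_id f := Subtype.ext (by simp)
  assoc f g h := Subtype.ext (by simp)

/-- The projection functor from the total category to the base. -/
def projF (L : FibredLocale.{w} B) : Tot L ⥤ B where
  obj A := A.1
  map f := f.1
  map_id _ := rfl
  map_comp _ _ := rfl

end FibredLocale

open FibredLocale

/-- A morphism is supine (cocartesian) relative to a functor `F`. -/
def Supine {E B' : Type*} [Category E] [Category B'] (F : E ⥤ B') {X Y : E} (f : X ⟶ Y) : Prop :=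
  ∀ ⦃Z : E⦄ (g : X ⟶ Z) (h : F.obj Y ⟶ F.obj Z),
    F.map g = F.map f ≫ h → ∃! k : Y ⟶ Z, f ≫ k = g ∧ F.map k = h

variable {B : Type u} [Category.{v} B]

/-- The class of supine monomorphisms of a fibred locale. -/
def SupineMono (L : FibredLocale.{w} B) {A C : Tot L} (w : A ⟶ C) : Prop :=
  Supine (projF L) w ∧ Mono w

/-!
A morphism `f : A ⟶ C` of the total category is supine exactly when `C ≤ ∃_f A` in the fibre over
`C`, and it is monic exactly when its underlying base morphism is (monicity is detected on the
vertex `reind a A ⊓ reind b A`). Hence supine monos are closed under identities and composition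
because `∃` is functorial, and right cancellation is just monicity. A pullback of `w` along `f`
in the total category sits over the base pullback `P` with fibre `reind p A ⊓ reind q Y`; its
projection `q` to `Y` is supine because `Y ≤ reind f (∃_w A) ≤ ∃_q (reind p A)` by Beck–Chevalley,
and then `Y ≤ ∃_q (reind p A) ⊓ Y ≤ ∃_q (reind p A ⊓ reind q Y)` by Frobenius.
-/

namespace FibredLocale

variable {B : Type u} [Category.{v} B] (L : FibredLocale.{w} B)

lemma le_reind_ex {X Y : B} (f : X ⟶ Y) (U : L.Fib X) : L.le U (L.reind f (L.ex f U)) :=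
  (L.ex_adj f U _).mp (L.le_refl _)

lemma ex_mono {X Y : B} (f : X ⟶ Y) {U V : L.Fib X} (h : L.le U V) :
    L.le (L.ex f U) (L.ex f V) :=
  (L.ex_adj f U _).mpr (L.le_trans h (L.le_reind_ex f V))

lemma ex_ex_le_ex_comp {X Y Z : B} (f : X ⟶ Y) (g : Y ⟶ Z) (U : L.Fib X) :
    L.le (L.ex g (L.ex f U)) (L.ex (f ≫ g) U) :=
  (L.ex_adj _ _ _).mpr <| (L.ex_adj _ _ _).mpr <|
    L.le_trans (L.le_reind_ex (f ≫ g) U) (L.reind_comp_le _ _ _)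

lemma le_reind_reind_of_comp_eq {X Y Z : B} {f : X ⟶ Y} {g : Y ⟶ Z} {h : X ⟶ Z} (e : f ≫ g = h)
    {U : L.Fib X} {V : L.Fib Z} (hU : L.le U (L.reind h V)) : L.le U (L.reind f (L.reind g V)) :=
  L.le_trans (e ▸ hU) (L.reind_comp_le f g V)

variable {L}

lemma Tot.hom_ext {A C : Tot L} {f g : A ⟶ C} (h : f.1 = g.1) : f = g := Subtype.ext h

instance : (projF L).Faithful where
  map_injective h := Tot.hom_ext h

lemma supine_iff_le_ex {A C : Tot L} (f : A ⟶ C) :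
    Supine (projF L) f ↔ L.le C.2 (L.ex f.1 A.2) := by
  constructor
  · intro hf
    obtain ⟨k, ⟨-, hk⟩, -⟩ :=
      hf (Z := ⟨C.1, L.ex f.1 A.2⟩) ⟨f.1, L.le_reind_ex f.1 A.2⟩ (𝟙 C.1) (Category.comp_id _).symm
    have hk : L.le C.2 (L.reind (𝟙 C.1) (L.ex f.1 A.2)) := hk ▸ k.2
    exact L.le_trans hk (L.reind_id_le _)
  · intro hC Z g h (hg : g.1 = f.1 ≫ h)
    have hA : L.le A.2 (L.reind f.1 (L.reind h Z.2)) :=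
      L.le_reind_reind_of_comp_eq hg.symm g.2
    refine ⟨⟨h, L.le_trans hC ((L.ex_adj _ _ _).mpr hA)⟩, ⟨Tot.hom_ext hg.symm, rfl⟩, ?_⟩
    rintro k ⟨-, hk⟩
    exact Tot.hom_ext hk

lemma mono_iff_mono_val {A C : Tot L} (f : A ⟶ C) : Mono f ↔ Mono f.1 := by
  refine ⟨fun hf => ⟨fun {T} a b hab => ?_⟩, fun hf => (projF L).mono_of_mono_map hf⟩
  let T' : Tot L := ⟨T, L.inf (L.reind a A.2) (L.reind b A.2)⟩
  have h : (⟨a, L.inf_le_left _ _⟩ : T' ⟶ A) ≫ f = (⟨b, L.inf_le_right _ _⟩ : T' ⟶ A) ≫ f :=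
    Tot.hom_ext hab
  exact congrArg Subtype.val (cancel_mono f |>.mp h)

namespace Tot

variable {A C Y : Tot L} (w : A ⟶ C) (f : Y ⟶ C) [HasPullback w.1 f.1]

noncomputable def pullbackObj : Tot L :=
  ⟨pullback w.1 f.1,
    L.inf (L.reind (pullback.fst w.1 f.1) A.2) (L.reind (pullback.snd w.1 f.1) Y.2)⟩

noncomputable def pullbackFst : pullbackObj w f ⟶ A := ⟨pullback.fst w.1 f.1, L.inf_le_left _ _⟩

noncomputable def pullbackSnd : pullbackObj w f ⟶ Y := ⟨pullback.snd w.1 f.1, L.inf_le_right _ _⟩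

lemma isPullback : IsPullback (pullbackFst w f) (pullbackSnd w f) w f := by
  have comm : pullbackFst w f ≫ w = pullbackSnd w f ≫ f := Tot.hom_ext pullback.condition
  refine IsPullback.of_isLimit' ⟨comm⟩ <| PullbackCone.IsLimit.mk comm
    (fun s => ⟨pullback.lift s.fst.1 s.snd.1 (congrArg Subtype.val s.condition),
      L.le_trans (L.le_inf ?_ ?_) (L.le_reind_inf _ _ _)⟩)
    (fun s => Tot.hom_ext (pullback.lift_fst _ _ _))
    (fun s => Tot.hom_ext (pullback.lift_snd _ _ _))
    (fun s m h₁ h₂ => Tot.hom_ext <| pullback.hom_ext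
      (by rw [pullback.lift_fst]; exact congrArg Subtype.val h₁)
      (by rw [pullback.lift_snd]; exact congrArg Subtype.val h₂))
  · exact L.le_reind_reind_of_comp_eq (pullback.lift_fst _ _ _) s.fst.2
  · exact L.le_reind_reind_of_comp_eq (pullback.lift_snd _ _ _) s.snd.2

lemma supine_pullbackSnd (hw : Supine (projF L) w) : Supine (projF L) (pullbackSnd w f) := by
  rw [supine_iff_le_ex] at hw ⊢
  have hBeck : L.le Y.2 (L.ex (pullback.snd w.1 f.1) (L.reind (pullback.fst w.1 f.1) A.2)) :=
    L.le_trans (L.le_trans f.2 (L.reind_mono f.1 hw))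
      (L.beck _ _ _ _ (IsPullback.of_hasPullback w.1 f.1) A.2).2
  exact L.le_trans (L.le_inf hBeck (L.le_refl _)) (L.le_frobenius _ _ _)

lemma mono_pullbackSnd [Mono w] : Mono (pullbackSnd w f) := by
  have : Mono w.1 := (mono_iff_mono_val w).mp ‹_›
  exact (mono_iff_mono_val _).mpr (inferInstanceAs (Mono (pullback.snd w.1 f.1)))

end Tot

lemma SupineMono.pullbackSnd {A C Y : Tot L} {w : A ⟶ C} (hw : SupineMono L w) (f : Y ⟶ C)
    [HasPullback w.1 f.1] : SupineMono L (Tot.pullbackSnd w f) :=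
  have := hw.2
  ⟨Tot.supine_pullbackSnd w f hw.1, Tot.mono_pullbackSnd w f⟩

lemma SupineMono.id (A : Tot L) : SupineMono L (𝟙 A) :=
  ⟨(supine_iff_le_ex _).mpr (L.le_trans (L.le_reind_ex _ _) (L.reind_id_le _)), inferInstance⟩

lemma SupineMono.comp {A C D : Tot L} {w : A ⟶ C} {w' : C ⟶ D} (hw : SupineMono L w)
    (hw' : SupineMono L w') : SupineMono L (w ≫ w') := by
  have := hw.2
  have := hw'.2
  refine ⟨(supine_iff_le_ex _).mpr ?_, mono_comp w w'⟩
  exact L.le_trans ((supine_iff_le_ex w').mp hw'.1) <|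
    L.le_trans (L.ex_mono w'.1 ((supine_iff_le_ex w).mp hw.1)) (L.ex_ex_le_ex_comp w.1 w'.1 A.2)

end FibredLocale

/-- In a fibred locale, the supine monomorphisms of the total category admit a calculus
of right fractions: they contain identities, are closed under composition, are stable
under pullback in the total category, and any parallel pair equalized by a supine
monomorphism is already equal. -/
theorem supine_mono_calculus_of_right_fractions
    [HasFiniteLimits B] (L : FibredLocale.{w} B) :
    (∀ A : Tot L, SupineMono L (𝟙 A)) ∧
    (∀ {A C D : Tot L} (w : A ⟶ C) (w' : C ⟶ D),
      SupineMono L w → SupineMono L w' → SupineMono L (w ≫ w')) ∧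
    (∀ {A C Y' : Tot L} (w : A ⟶ C) (f : Y' ⟶ C), SupineMono L w →
      ∃ (A' : Tot L) (w' : A' ⟶ Y') (f' : A' ⟶ A),
        SupineMono L w' ∧ IsPullback f' w' w f) ∧
    (∀ {Z A C : Tot L} (f g : Z ⟶ A) (w : A ⟶ C),
      SupineMono L w → f ≫ w = g ≫ w → f = g) := by
  refine ⟨SupineMono.id, fun _ _ hw hw' => hw.comp hw', ?_, ?_⟩
  · intro A C Y w f hw
    exact ⟨_, Tot.pullbackSnd w f, Tot.pullbackFst w f, hw.pullbackSnd f, Tot.isPullback w f⟩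
  · intro Z A C f g w hw h
    have := hw.2
    exact (cancel_mono w).mp h
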